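/- arXiv:1806.08142 — 3 statements merged into one kernel-verified Lean document; each statement's English description precedes it below -/
import Mathlib

section
/- Let π₁ and π₂ be compatible linear Poisson tensors on ℝ^N, both not depending on the variable x_p for some fixed 1 ≤ p ≤ N, and let c be a Casimir function for π₂. Then for all λ, ε ∈ ℝ the 2N×2N matrix field on ℝ^{2N} with blocks Π^{xx}(x,y) = ε·π₂(x), Π^{xy}(x,y) = π₂(x) + c(x)·E_pp, Π^{yx}(x,y) = π₂(x) − c(x)·E_pp, Π^{yy}(x,y) = ∑_{s=1}^N (∂π₂/∂x_s)(x) y_s + λ·π₁(x) − λε·π₁(y) is a Poisson tensor on ℝ^{2N}. -/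
open scoped ContDiff

/-- Partial derivative `∂f/∂z_s` at `z`, for functions on `ℝ^ι`. -/
noncomputable def pd {ι : Type} [Fintype ι] [DecidableEq ι]
    (s : ι) (f : (ι → ℝ) → ℝ) (x : ι → ℝ) : ℝ :=
  fderiv ℝ f x (Pi.single s 1)

/-- A Poisson tensor on `ℝ^ι`: a smooth antisymmetric matrix field satisfying the
Jacobi condition. -/
def IsPoissonTensor {ι : Type} [Fintype ι] [DecidableEq ι]
    (π : (ι → ℝ) → Matrix ι ι ℝ) : Prop :=
  (∀ i j, ContDiff ℝ ∞ fun x => π x i j) ∧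
  (∀ x i j, π x j i = - π x i j) ∧
  (∀ x i j k, ∑ s, (pd s (fun y => π y i j) x * π x s k
      + pd s (fun y => π y k i) x * π x s j
      + pd s (fun y => π y j k) x * π x s i) = 0)

/-- `c` is a (smooth) Casimir function for `π`. -/
def IsCasimir {ι : Type} [Fintype ι] [DecidableEq ι]
    (π : (ι → ℝ) → Matrix ι ι ℝ) (c : (ι → ℝ) → ℝ) : Prop :=
  ContDiff ℝ ∞ c ∧ ∀ x j, ∑ s, pd s c x * π x s j = 0

/-- The matrix of partial derivatives `(∂π_{ij}/∂x_s)(x)`. -/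
noncomputable def pdMat {N : ℕ} (s : Fin N)
    (π : (Fin N → ℝ) → Matrix (Fin N) (Fin N) ℝ) (x : Fin N → ℝ) :
    Matrix (Fin N) (Fin N) ℝ :=
  Matrix.of fun i j => pd s (fun y => π y i j) x

/-- The `x`-part of a point `z = (x,y) ∈ ℝ^{2N}`. -/
def Xc {N : ℕ} (z : (Fin N ⊕ Fin N) → ℝ) : Fin N → ℝ := fun i => z (Sum.inl i)

/-- The `y`-part of a point `z = (x,y) ∈ ℝ^{2N}`. -/
def Yc {N : ℕ} (z : (Fin N ⊕ Fin N) → ℝ) : Fin N → ℝ := fun i => z (Sum.inr i)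

/-- A linear (Lie–Poisson) tensor: `π_{ij}(x) = ∑ n, c^n_{ij} x_n`. -/
def IsLinearTensor {N : ℕ} (π : (Fin N → ℝ) → Matrix (Fin N) (Fin N) ℝ) : Prop :=
  ∃ C : Fin N → Fin N → Fin N → ℝ, ∀ x i j, π x i j = ∑ n, C i j n * x n

/-!
Write the tensor as `Π₀ + c(x) • (e_{x_p} ∧ e_{y_p})` with `Π₀` linear. In the splitting
`ℝ^{2N} = ℝ^N ⊕ ℝ^N`, the structure constants of `Π₀` are those of `π₂` tensored with the
multiplication table of `ℝ[u]/(u² - εu)` plus `λ` times those of `π₁` tensored with a second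
table. All triple products of these tables are cyclically symmetric, and the two mixed ones agree,
so the Jacobiator of `Π₀` is a combination of the Jacobiators of `π₁`, `π₂` and of their
compatibility term, hence zero.

Adding `f • (e_u ∧ e_v)` to a Poisson tensor independent of `x_u, x_v` keeps it Poisson when `f`
is a Casimir: the cross terms vanish by these two assumptions, and the square term because
`e_u ∧ e_v` is decomposable. Here `c ∘ x` is a Casimir of `Π₀` since the `x`-rows of `Π₀` are
multiples of `π₂(x)`, and `Π₀` does not depend on `x_p, y_p` since `π₁, π₂` do not depend on `x_p`.
-/

section LinearTensor

variable {ι : Type} [Fintype ι]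

def linearTensor (C : ι → ι → ι → ℝ) (x : ι → ℝ) : Matrix ι ι ℝ :=
  Matrix.of fun i j => ∑ n, C i j n * x n

def jacobiConst (C C' : ι → ι → ι → ℝ) (i j k n : ι) : ℝ :=
  ∑ s, (C i j s * C' s k n + C k i s * C' s j n + C j k s * C' s i n)

lemma linearTensor_add (C C' : ι → ι → ι → ℝ) (x : ι → ℝ) :
    linearTensor (C + C') x = linearTensor C x + linearTensor C' x := by
  ext i j
  simp [linearTensor, add_mul, Finset.sum_add_distrib]

lemma linearTensor_single [DecidableEq ι] (C : ι → ι → ι → ℝ) (i j n : ι) :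
    linearTensor C (Pi.single n 1) i j = C i j n := by
  simp [linearTensor, Pi.single_apply]

lemma contDiff_linearTensor (C : ι → ι → ι → ℝ) (i j : ι) :
    ContDiff ℝ ∞ fun x => linearTensor C x i j := by
  simp only [linearTensor, Matrix.of_apply]
  fun_prop

lemma pd_linear [DecidableEq ι] (C : ι → ℝ) (s : ι) (x : ι → ℝ) :
    pd s (fun y => ∑ n, C n * y n) x = C s := by
  have h : (fun y : ι → ℝ => ∑ n, C n * y n)
      = ⇑(∑ n, C n • (ContinuousLinearMap.proj n : (ι → ℝ) →L[ℝ] ℝ)) := by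
    funext y
    simp
  rw [pd, h, ContinuousLinearMap.fderiv]
  simp [Pi.single_apply]

lemma pd_linearTensor [DecidableEq ι] (C : ι → ι → ι → ℝ) (s i j : ι) (x : ι → ℝ) :
    pd s (fun y => linearTensor C y i j) x = C i j s :=
  pd_linear _ s x

lemma jacobi_linearTensor (C C' : ι → ι → ι → ℝ) (x : ι → ℝ) (i j k : ι) :
    ∑ s, (C i j s * linearTensor C' x s k + C k i s * linearTensor C' x s j
      + C j k s * linearTensor C' x s i) = ∑ n, jacobiConst C C' i j k n * x n := by
  simp only [linearTensor, jacobiConst, Matrix.of_apply, Finset.mul_sum, Finset.sum_mul,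
    ← Finset.sum_add_distrib]
  rw [Finset.sum_comm]
  exact Finset.sum_congr rfl fun _ _ => Finset.sum_congr rfl fun _ _ => by ring

theorem isPoissonTensor_linearTensor_iff [DecidableEq ι] (C : ι → ι → ι → ℝ) :
    IsPoissonTensor (linearTensor C) ↔
      (∀ i j n, C j i n = -C i j n) ∧ ∀ i j k n, jacobiConst C C i j k n = 0 := by
  simp only [IsPoissonTensor, pd_linearTensor, jacobi_linearTensor]
  refine ⟨fun ⟨_, hanti, hjac⟩ => ⟨fun i j n => ?_, fun i j k n => ?_⟩,
    fun ⟨hanti, hjac⟩ => ⟨contDiff_linearTensor C, fun x i j => ?_, fun x i j k => ?_⟩⟩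
  · simpa [linearTensor_single] using hanti (Pi.single n 1) i j
  · simpa [Pi.single_apply] using hjac (Pi.single n 1) i j k
  · simp only [linearTensor, Matrix.of_apply, ← Finset.sum_neg_distrib]
    exact Finset.sum_congr rfl fun n _ => by rw [hanti]; ring
  · simp [hjac]

lemma jacobiConst_add_left (C C' D : ι → ι → ι → ℝ) (i j k n : ι) :
    jacobiConst (C + C') D i j k n = jacobiConst C D i j k n + jacobiConst C' D i j k n := by
  simp only [jacobiConst, Pi.add_apply, ← Finset.sum_add_distrib]
  exact Finset.sum_congr rfl fun _ _ => by ring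

lemma jacobiConst_add_right (C D D' : ι → ι → ι → ℝ) (i j k n : ι) :
    jacobiConst C (D + D') i j k n = jacobiConst C D i j k n + jacobiConst C D' i j k n := by
  simp only [jacobiConst, Pi.add_apply, ← Finset.sum_add_distrib]
  exact Finset.sum_congr rfl fun _ _ => by ring

lemma jacobiConst_smul_left (t : ℝ) (C D : ι → ι → ι → ℝ) (i j k n : ι) :
    jacobiConst (t • C) D i j k n = t * jacobiConst C D i j k n := by
  simp only [jacobiConst, Pi.smul_apply, smul_eq_mul, Finset.mul_sum]
  exact Finset.sum_congr rfl fun _ _ => by ring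

lemma jacobiConst_smul_right (t : ℝ) (C D : ι → ι → ι → ℝ) (i j k n : ι) :
    jacobiConst C (t • D) i j k n = t * jacobiConst C D i j k n := by
  simp only [jacobiConst, Pi.smul_apply, smul_eq_mul, Finset.mul_sum]
  exact Finset.sum_congr rfl fun _ _ => by ring

theorem jacobiConst_cross_of_isPoissonTensor [DecidableEq ι] {C C' : ι → ι → ι → ℝ}
    (h : IsPoissonTensor (linearTensor C)) (h' : IsPoissonTensor (linearTensor C'))
    (hsum : IsPoissonTensor (linearTensor (C + C'))) (i j k n : ι) :
    jacobiConst C C' i j k n + jacobiConst C' C i j k n = 0 := by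
  have hCC := ((isPoissonTensor_linearTensor_iff C).1 h).2 i j k n
  have hC'C' := ((isPoissonTensor_linearTensor_iff C').1 h').2 i j k n
  have hsum := ((isPoissonTensor_linearTensor_iff _).1 hsum).2 i j k n
  simp only [jacobiConst_add_left, jacobiConst_add_right] at hsum
  linarith

lemma IsLinearTensor.exists_eq_linearTensor {N : ℕ} {π : (Fin N → ℝ) → Matrix (Fin N) (Fin N) ℝ}
    (h : IsLinearTensor π) : ∃ C, π = linearTensor C := by
  obtain ⟨C, hC⟩ := h
  exact ⟨C, funext fun x => Matrix.ext fun i j => hC x i j⟩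

end LinearTensor

section BlockConst

variable {ι : Type}

-- The structure constants `m ⊗ C` on `ι ⊕ ι`, the tag `true` standing for `inl`.
def blockConst (m : Bool → Bool → Bool → ℝ) (C : ι → ι → ι → ℝ) (I J K : ι ⊕ ι) : ℝ :=
  m I.isLeft J.isLeft K.isLeft * C (I.elim id id) (J.elim id id) (K.elim id id)

-- The coefficient of `d` in `(a ·ₘ b) ·ₘ' c`.
def structComp (m m' : Bool → Bool → Bool → ℝ) (a b c d : Bool) : ℝ :=
  ∑ e, m a b e * m' e c d

lemma blockConst_antisymm {m : Bool → Bool → Bool → ℝ} (hm : ∀ a b c, m b a c = m a b c)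
    {C : ι → ι → ι → ℝ} (hC : ∀ i j n, C j i n = -C i j n) (I J K : ι ⊕ ι) :
    blockConst m C J I K = -blockConst m C I J K := by
  rw [blockConst, blockConst, hm, hC, mul_neg]

-- Cyclic symmetry of `structComp` holds e.g. when `m = m'` is commutative and associative.
theorem jacobiConst_blockConst [Fintype ι] {m m' : Bool → Bool → Bool → ℝ}
    (hcyc : ∀ a b c d, structComp m m' a b c d = structComp m m' c a b d)
    (C C' : ι → ι → ι → ℝ) (I J K M : ι ⊕ ι) :
    jacobiConst (blockConst m C) (blockConst m' C') I J K M =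
      structComp m m' I.isLeft J.isLeft K.isLeft M.isLeft *
        jacobiConst C C' (I.elim id id) (J.elim id id) (K.elim id id) (M.elim id id) := by
  have h₁ := hcyc I.isLeft J.isLeft K.isLeft M.isLeft
  have h₂ := hcyc J.isLeft K.isLeft I.isLeft M.isLeft
  simp only [structComp, Fintype.sum_bool] at h₁ h₂
  simp only [jacobiConst, blockConst, structComp, Fintype.sum_bool, Fintype.sum_sum_type,
    Sum.isLeft_inl, Sum.isLeft_inr, Sum.elim_inl, Sum.elim_inr, id, Finset.mul_sum,
    ← Finset.sum_add_distrib]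
  refine Finset.sum_congr rfl fun s _ => ?_
  linear_combination -(C (K.elim id id) (I.elim id id) s * C' s (J.elim id id) (M.elim id id)) * h₁
    + (C (J.elim id id) (K.elim id id) s * C' s (I.elim id id) (M.elim id id)) * h₂

end BlockConst

section CasimirPerturbation

variable {ι : Type} [DecidableEq ι]

def basisWedge (u v : ι) : Matrix ι ι ℝ :=
  Matrix.single u v 1 - Matrix.single v u 1

lemma basisWedge_apply (u v i j : ι) :
    basisWedge u v i j = (Pi.single u 1 : ι → ℝ) i * (Pi.single v 1 : ι → ℝ) j
      - (Pi.single v 1 : ι → ℝ) i * (Pi.single u 1 : ι → ℝ) j := by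
  simp [basisWedge, Matrix.single_eq_single_vecMulVec_single, Matrix.vecMulVec_apply]

variable [Fintype ι]

lemma sum_mul_basisWedge (g : ι → ℝ) (u v k : ι) :
    ∑ s, g s * basisWedge u v s k
      = g u * (Pi.single v 1 : ι → ℝ) k - g v * (Pi.single u 1 : ι → ℝ) k := by
  simp [basisWedge_apply, mul_sub, Finset.sum_sub_distrib, Pi.single_apply]

-- `E ∧ ι_g E = 0`, as `E = e_u ∧ e_v` is decomposable.
lemma basisWedge_mul_sum_cyclic (g : ι → ℝ) (u v i j k : ι) :
    basisWedge u v i j * ∑ s, g s * basisWedge u v s k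
      + basisWedge u v k i * ∑ s, g s * basisWedge u v s j
      + basisWedge u v j k * ∑ s, g s * basisWedge u v s i = 0 := by
  simp only [sum_mul_basisWedge]
  simp only [basisWedge_apply]
  ring

lemma pd_add_mul_const {f g : (ι → ℝ) → ℝ} {x : ι → ℝ} (hf : DifferentiableAt ℝ f x)
    (hg : DifferentiableAt ℝ g x) (e : ℝ) (s : ι) :
    pd s (fun y => f y + g y * e) x = pd s f x + pd s g x * e := by
  rw [pd, pd, pd, fderiv_fun_add hf (hg.mul_const e), fderiv_mul_const hg]
  simp [mul_comm]

theorem IsPoissonTensor.add_smul_basisWedge {π : (ι → ℝ) → Matrix ι ι ℝ}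
    (hπ : IsPoissonTensor π) {f : (ι → ℝ) → ℝ} (hf : IsCasimir π f) {u v : ι}
    (hu : ∀ x i j, pd u (fun y => π y i j) x = 0) (hv : ∀ x i j, pd v (fun y => π y i j) x = 0) :
    IsPoissonTensor fun x => π x + f x • basisWedge u v := by
  obtain ⟨hsmooth, hanti, hjac⟩ := hπ
  obtain ⟨hfs, hcas⟩ := hf
  simp only [IsPoissonTensor, Matrix.add_apply, Matrix.smul_apply, smul_eq_mul]
  refine ⟨fun i j => (hsmooth i j).add (hfs.mul contDiff_const), fun x i j => ?_,
    fun x i j k => ?_⟩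
  · rw [hanti, basisWedge_apply, basisWedge_apply]
    ring
  set a : ι → ι → ι → ℝ := fun i j s => pd s (fun y => π y i j) x
  set b : ι → ℝ := fun s => pd s f x
  set E := basisWedge u v
  have hJ : ∑ s, a i j s * π x s k + ∑ s, a k i s * π x s j + ∑ s, a j k s * π x s i = 0 := by
    rw [← Finset.sum_add_distrib, ← Finset.sum_add_distrib]
    exact hjac x i j k
  have hC : ∀ j, ∑ s, b s * π x s j = 0 := hcas x
  have hpd : ∀ s i j, pd s (fun y => π y i j + f y * E i j) x = a i j s + b s * E i j :=
    fun s i j => pd_add_mul_const ((hsmooth i j).differentiable (by simp) x)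
      (hfs.differentiable (by simp) x) _ s
  have hexpand : ∀ s, (a i j s + b s * E i j) * (π x s k + f x * E s k)
      + (a k i s + b s * E k i) * (π x s j + f x * E s j)
      + (a j k s + b s * E j k) * (π x s i + f x * E s i)
      = (a i j s * π x s k + a k i s * π x s j + a j k s * π x s i)
        + (E i j * (b s * π x s k) + E k i * (b s * π x s j) + E j k * (b s * π x s i))
        + f x * (a i j s * E s k + a k i s * E s j + a j k s * E s i)
        + f x * (E i j * (b s * E s k) + E k i * (b s * E s j) + E j k * (b s * E s i)) :=
    fun s => by ring
  have hflat : ∀ i j k, ∑ s, a i j s * E s k = 0 := fun i j k => by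
    simp [E, a, sum_mul_basisWedge, hu, hv]
  simp only [hpd, hexpand, Finset.sum_add_distrib, ← Finset.mul_sum, hflat, hJ, hC]
  simp [E, basisWedge_mul_sum_cyclic]

end CasimirPerturbation

section Doubling

-- Structure constants of `ℝ[u]/(u² - εu)` in the basis `(u, 1)`, `true` standing for `u`.
def epsMul (ε : ℝ) : Bool → Bool → Bool → ℝ
  | true, true, true => ε
  | true, false, true => 1
  | false, true, true => 1
  | false, false, false => 1
  | _, _, _ => 0

-- `x ∘ y = φ x * φ y * (u - ε)`, `φ` the coefficient of `1`: the `λ`-part of the `yy`-block.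
def shiftMul (ε : ℝ) : Bool → Bool → Bool → ℝ
  | false, false, true => 1
  | false, false, false => -ε
  | _, _, _ => 0

variable {ι : Type}

def doubleConst (ε lam : ℝ) (C₁ C₂ : ι → ι → ι → ℝ) : ι ⊕ ι → ι ⊕ ι → ι ⊕ ι → ℝ :=
  blockConst (epsMul ε) C₂ + lam • blockConst (shiftMul ε) C₁

lemma structComp_epsMul_epsMul_cyclic (ε : ℝ) (a b c d : Bool) :
    structComp (epsMul ε) (epsMul ε) a b c d = structComp (epsMul ε) (epsMul ε) c a b d := by
  cases a <;> cases b <;> cases c <;> cases d <;> simp [structComp, epsMul]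

lemma structComp_shiftMul_shiftMul_cyclic (ε : ℝ) (a b c d : Bool) :
    structComp (shiftMul ε) (shiftMul ε) a b c d
      = structComp (shiftMul ε) (shiftMul ε) c a b d := by
  cases a <;> cases b <;> cases c <;> cases d <;> simp [structComp, shiftMul]

lemma structComp_epsMul_shiftMul (ε : ℝ) (a b c d : Bool) :
    structComp (epsMul ε) (shiftMul ε) a b c d = structComp (shiftMul ε) (epsMul ε) a b c d := by
  cases a <;> cases b <;> cases c <;> cases d <;> simp [structComp, epsMul, shiftMul]

lemma structComp_shiftMul_epsMul_cyclic (ε : ℝ) (a b c d : Bool) :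
    structComp (shiftMul ε) (epsMul ε) a b c d = structComp (shiftMul ε) (epsMul ε) c a b d := by
  cases a <;> cases b <;> cases c <;> cases d <;> simp [structComp, epsMul, shiftMul]

lemma structComp_epsMul_shiftMul_cyclic (ε : ℝ) (a b c d : Bool) :
    structComp (epsMul ε) (shiftMul ε) a b c d = structComp (epsMul ε) (shiftMul ε) c a b d := by
  simp only [structComp_epsMul_shiftMul, structComp_shiftMul_epsMul_cyclic]

theorem jacobiConst_doubleConst [Fintype ι] (ε lam : ℝ) {C₁ C₂ : ι → ι → ι → ℝ}
    (h₁ : ∀ i j k n, jacobiConst C₁ C₁ i j k n = 0) (h₂ : ∀ i j k n, jacobiConst C₂ C₂ i j k n = 0)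
    (h₁₂ : ∀ i j k n, jacobiConst C₁ C₂ i j k n + jacobiConst C₂ C₁ i j k n = 0)
    (I J K M : ι ⊕ ι) :
    jacobiConst (doubleConst ε lam C₁ C₂) (doubleConst ε lam C₁ C₂) I J K M = 0 := by
  simp only [doubleConst, jacobiConst_add_left, jacobiConst_add_right, jacobiConst_smul_left,
    jacobiConst_smul_right,
    jacobiConst_blockConst (structComp_epsMul_epsMul_cyclic ε),
    jacobiConst_blockConst (structComp_shiftMul_shiftMul_cyclic ε),
    jacobiConst_blockConst (structComp_epsMul_shiftMul_cyclic ε),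
    jacobiConst_blockConst (structComp_shiftMul_epsMul_cyclic ε), h₁, h₂,
    structComp_epsMul_shiftMul]
  linear_combination lam * structComp (shiftMul ε) (epsMul ε) I.isLeft J.isLeft K.isLeft M.isLeft *
    h₁₂ (I.elim id id) (J.elim id id) (K.elim id id) (M.elim id id)

theorem isPoissonTensor_doubleConst [Fintype ι] [DecidableEq ι] {C₁ C₂ : ι → ι → ι → ℝ}
    (h₁ : IsPoissonTensor (linearTensor C₁)) (h₂ : IsPoissonTensor (linearTensor C₂))
    (h₁₂ : IsPoissonTensor (linearTensor (C₁ + C₂))) (ε lam : ℝ) :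
    IsPoissonTensor (linearTensor (doubleConst ε lam C₁ C₂)) := by
  obtain ⟨hanti₁, hjac₁⟩ := (isPoissonTensor_linearTensor_iff C₁).1 h₁
  obtain ⟨hanti₂, hjac₂⟩ := (isPoissonTensor_linearTensor_iff C₂).1 h₂
  have hε : ∀ a b c, epsMul ε b a c = epsMul ε a b c := by
    intro a b c; cases a <;> cases b <;> cases c <;> rfl
  have hshift : ∀ a b c, shiftMul ε b a c = shiftMul ε a b c := by
    intro a b c; cases a <;> cases b <;> cases c <;> rfl
  refine (isPoissonTensor_linearTensor_iff _).2 ⟨fun I J K => ?_,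
    jacobiConst_doubleConst ε lam hjac₁ hjac₂ (jacobiConst_cross_of_isPoissonTensor h₁ h₂ h₁₂)⟩
  simp only [doubleConst, Pi.add_apply, Pi.smul_apply, smul_eq_mul]
  rw [blockConst_antisymm hε hanti₂, blockConst_antisymm hshift hanti₁]
  ring

lemma doubleConst_eq_zero {ε lam : ℝ} {C₁ C₂ : ι → ι → ι → ℝ} {p : ι}
    (h₁ : ∀ i j, C₁ i j p = 0) (h₂ : ∀ i j, C₂ i j p = 0) (I J K : ι ⊕ ι)
    (hK : K.elim id id = p) :
    doubleConst ε lam C₁ C₂ I J K = 0 := by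
  simp [doubleConst, blockConst, hK, h₁, h₂]

end Doubling

section DoubledSpace

variable {N : ℕ}

def xPartCLM : ((Fin N ⊕ Fin N) → ℝ) →L[ℝ] (Fin N → ℝ) :=
  ContinuousLinearMap.pi fun i => ContinuousLinearMap.proj (Sum.inl i)

lemma pd_comp_Xc {f : (Fin N → ℝ) → ℝ} (hf : Differentiable ℝ f) (S : Fin N ⊕ Fin N)
    (z : (Fin N ⊕ Fin N) → ℝ) :
    pd S (fun w => f (Xc w)) z = fderiv ℝ f (Xc z) (Xc (Pi.single S 1)) := by
  change fderiv ℝ (f ∘ xPartCLM) z (Pi.single S 1) = _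
  rw [fderiv_comp _ (hf _) xPartCLM.differentiableAt, xPartCLM.fderiv]
  rfl

lemma Xc_single_inl (n : Fin N) : Xc (Pi.single (Sum.inl n) 1) = (Pi.single n 1 : Fin N → ℝ) := by
  funext i
  simp [Xc, Pi.single_apply]

lemma Xc_single_inr (n : Fin N) : Xc (Pi.single (Sum.inr n) 1) = (0 : Fin N → ℝ) := by
  funext i
  simp [Xc]

lemma pd_inl_comp_Xc {f : (Fin N → ℝ) → ℝ} (hf : Differentiable ℝ f) (n : Fin N)
    (z : (Fin N ⊕ Fin N) → ℝ) : pd (Sum.inl n) (fun w => f (Xc w)) z = pd n f (Xc z) := by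
  rw [pd_comp_Xc hf, Xc_single_inl, pd]

lemma pd_inr_comp_Xc {f : (Fin N → ℝ) → ℝ} (hf : Differentiable ℝ f) (n : Fin N)
    (z : (Fin N ⊕ Fin N) → ℝ) : pd (Sum.inr n) (fun w => f (Xc w)) z = 0 := by
  rw [pd_comp_Xc hf, Xc_single_inr, map_zero]

lemma linearTensor_doubleConst (ε lam : ℝ) (C₁ C₂ : Fin N → Fin N → Fin N → ℝ)
    (z : (Fin N ⊕ Fin N) → ℝ) :
    linearTensor (doubleConst ε lam C₁ C₂) z =
      Matrix.fromBlocks (ε • linearTensor C₂ (Xc z)) (linearTensor C₂ (Xc z))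
        (linearTensor C₂ (Xc z))
        (linearTensor C₂ (Yc z) + lam • linearTensor C₁ (Xc z)
          - (lam * ε) • linearTensor C₁ (Yc z)) := by
  ext (i | i) (j | j) <;>
    simp [linearTensor, doubleConst, blockConst, epsMul, shiftMul, Fintype.sum_sum_type, Xc, Yc,
      Finset.mul_sum, add_mul, Finset.sum_add_distrib, mul_assoc]
  ring

theorem isCasimir_doubleConst (ε lam : ℝ) (C₁ : Fin N → Fin N → Fin N → ℝ)
    {C₂ : Fin N → Fin N → Fin N → ℝ} {c : (Fin N → ℝ) → ℝ} (hc : IsCasimir (linearTensor C₂) c) :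
    IsCasimir (linearTensor (doubleConst ε lam C₁ C₂)) fun z => c (Xc z) := by
  have hdiff : Differentiable ℝ c := hc.1.differentiable (by simp)
  refine ⟨hc.1.comp xPartCLM.contDiff, fun z J => ?_⟩
  have hcas := hc.2 (Xc z)
  simp only [Fintype.sum_sum_type, pd_inl_comp_Xc hdiff, pd_inr_comp_Xc hdiff, zero_mul,
    Finset.sum_const_zero, add_zero, linearTensor_doubleConst]
  rcases J with j | j
  · simp [mul_left_comm _ ε, ← Finset.mul_sum, hcas]
  · simpa using hcas j

lemma basisWedge_inl_inr {ι : Type} [DecidableEq ι] (p : ι) :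
    basisWedge (Sum.inl p) (Sum.inr p) =
      Matrix.fromBlocks 0 (Matrix.single p p 1) (-Matrix.single p p 1) 0 := by
  ext (i | i) (j | j) <;> simp [basisWedge, Matrix.single_apply]

lemma sum_smul_pdMat_linearTensor (C : Fin N → Fin N → Fin N → ℝ) (x y : Fin N → ℝ) :
    ∑ s, y s • pdMat s (linearTensor C) x = linearTensor C y := by
  ext i j
  simp only [pdMat, Matrix.sum_apply, Matrix.smul_apply, Matrix.of_apply, pd_linearTensor,
    smul_eq_mul]
  simp [linearTensor, mul_comm]

end DoubledSpace

theorem stmt14_general {N : ℕ}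
    (π₁ π₂ : (Fin N → ℝ) → Matrix (Fin N) (Fin N) ℝ)
    (hπ₁ : IsPoissonTensor π₁) (hπ₂ : IsPoissonTensor π₂)
    (hlin₁ : IsLinearTensor π₁) (hlin₂ : IsLinearTensor π₂)
    (hcomp : IsPoissonTensor (fun x => π₁ x + π₂ x))
    (p : Fin N)
    (hp₁ : ∀ x i j, pd p (fun y => π₁ y i j) x = 0)
    (hp₂ : ∀ x i j, pd p (fun y => π₂ y i j) x = 0)
    (c : (Fin N → ℝ) → ℝ) (hc : IsCasimir π₂ c)
    (lam eps : ℝ) :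
    IsPoissonTensor (fun z : (Fin N ⊕ Fin N) → ℝ =>
      Matrix.fromBlocks
        (eps • π₂ (Xc z))
        (π₂ (Xc z) + c (Xc z) • Matrix.single p p (1 : ℝ))
        (π₂ (Xc z) - c (Xc z) • Matrix.single p p (1 : ℝ))
        (∑ s, Yc z s • pdMat s π₂ (Xc z) + lam • π₁ (Xc z) - (lam * eps) • π₁ (Yc z))) := by
  obtain ⟨C₁, rfl⟩ := hlin₁.exists_eq_linearTensor
  obtain ⟨C₂, rfl⟩ := hlin₂.exists_eq_linearTensor
  simp only [← linearTensor_add] at hcomp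
  have hC₁ : ∀ i j, C₁ i j p = 0 := fun i j => by simpa [pd_linearTensor] using hp₁ 0 i j
  have hC₂ : ∀ i j, C₂ i j p = 0 := fun i j => by simpa [pd_linearTensor] using hp₂ 0 i j
  have hflat : ∀ K : Fin N ⊕ Fin N, K.elim id id = p → ∀ z I J,
      pd K (fun w => linearTensor (doubleConst eps lam C₁ C₂) w I J) z = 0 :=
    fun K hK z I J => by rw [pd_linearTensor, doubleConst_eq_zero hC₁ hC₂ I J K hK]
  have hPoisson := (isPoissonTensor_doubleConst hπ₁ hπ₂ hcomp eps lam).add_smul_basisWedge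
    (isCasimir_doubleConst eps lam C₁ hc) (hflat (Sum.inl p) rfl) (hflat (Sum.inr p) rfl)
  convert hPoisson using 2 with z
  rw [linearTensor_doubleConst, basisWedge_inl_inr, Matrix.fromBlocks_smul, Matrix.fromBlocks_add,
    sum_smul_pdMat_linearTensor]
  simp [sub_eq_add_neg]

/-- for compatible linear Poisson tensors `π₁, π₂` independent of `x_p`
and a Casimir `c` of `π₂`, the tensor with blocks `[[επ₂(x), π₂(x)+c(x)E_pp],
[π₂(x)−c(x)E_pp, ∑_s (∂π₂/∂x_s)(x) y_s + λπ₁(x) − λε π₁(y)]]` is Poisson. -/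
theorem stmt14 {N : ℕ} (hN : 1 ≤ N)
    (π₁ π₂ : (Fin N → ℝ) → Matrix (Fin N) (Fin N) ℝ)
    (hπ₁ : IsPoissonTensor π₁) (hπ₂ : IsPoissonTensor π₂)
    (hlin₁ : IsLinearTensor π₁) (hlin₂ : IsLinearTensor π₂)
    (hcomp : IsPoissonTensor (fun x => π₁ x + π₂ x))
    (p : Fin N)
    (hp₁ : ∀ x i j, pd p (fun y => π₁ y i j) x = 0)
    (hp₂ : ∀ x i j, pd p (fun y => π₂ y i j) x = 0)
    (c : (Fin N → ℝ) → ℝ) (hc : IsCasimir π₂ c)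
    (lam eps : ℝ) :
    IsPoissonTensor (fun z : (Fin N ⊕ Fin N) → ℝ =>
      Matrix.fromBlocks
        (eps • π₂ (Xc z))
        (π₂ (Xc z) + c (Xc z) • Matrix.single p p (1 : ℝ))
        (π₂ (Xc z) - c (Xc z) • Matrix.single p p (1 : ℝ))
        (∑ s, Yc z s • pdMat s π₂ (Xc z) + lam • π₁ (Xc z) - (lam * eps) • π₁ (Yc z))) :=
  stmt14_general π₁ π₂ hπ₁ hπ₂ hlin₁ hlin₂ hcomp p hp₁ hp₂ c hc lam eps
end

section
/- Let π₂ be a constant Poisson tensor on ℝ^N (π₂(x) = A for all x, where A is a constant antisymmetric N×N real matrix) and let π₁ be a Poisson tensor on ℝ^N compatible with π₂. Then the pair (π₁, π₂) satisfies, for all x, y ∈ ℝ^N and all indices i, j, k: (i) ∑_{s=1}^N ( π_{2,sk}(x) (∂π_{1,ij}/∂y_s)(y) + π_{2,sj}(x) (∂π_{1,ki}/∂y_s)(y) + π_{2,si}(x) (∂π_{1,jk}/∂y_s)(y) ) = 0; (ii) ∑_{s=1}^N ( (∑_{m=1}^N y_m (∂π_{2,sk}/∂x_m)(x)) (∂π_{1,ij}/∂y_s)(y)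 + π_{1,si}(y) (∂π_{2,jk}/∂x_s)(x) + π_{1,sj}(y) (∂π_{2,ki}/∂x_s)(x) ) = 0; and (iii) ∑_{s,m=1}^N y_s π_{1,mk}(y) (∂²π_{2,ij}/∂x_m ∂x_s)(x) = 0 (here ∂π₁/∂y_s is the partial derivative of π₁ in its s-th argument evaluated at y). In particular, the matrix field with blocks Π^{xx}(x,y) = π₁(y), Π^{xy} = Π^{yx} = A, Π^{yy} = 0 is a Poisson tensor on ℝ^{2N}. -/
open scoped ContDiff

/-! Since `π₂ ≡ A` has vanishing derivatives, (ii) and (iii) are trivial, and the Jacobi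
expression of `π₁ + A` is that of `π₁` plus the cyclic sum in (i), which therefore vanishes.
In the block tensor on `ℝ^{2N}` only the block `π₁(y)` is non-constant and it depends on `y`
alone, so the only Jacobi expression that survives is the one with three `x`-indices, and it
is the cyclic sum (i) again. -/

section PartialDerivative

variable {ι : Type} [Fintype ι] [DecidableEq ι]

@[simp]
lemma pd_const (s : ι) (c : ℝ) (x : ι → ℝ) : pd s (fun _ => c) x = 0 := by
  simp [pd]

@[simp]
lemma pd_add_const (s : ι) (f : (ι → ℝ) → ℝ) (c : ℝ) (x : ι → ℝ) :
    pd s (fun y => f y + c) x = pd s f x := by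
  simp [pd, fderiv_add_const]

variable {κ : Type} [Fintype κ] [DecidableEq κ]

lemma pd_comp_inr (t : κ ⊕ ι) (f : (ι → ℝ) → ℝ) (z : κ ⊕ ι → ℝ)
    (hf : DifferentiableAt ℝ f fun i => z (Sum.inr i)) :
    pd t (fun z => f fun i => z (Sum.inr i)) z
      = fderiv ℝ f (fun i => z (Sum.inr i))
          fun i => (Pi.single t 1 : κ ⊕ ι → ℝ) (Sum.inr i) := by
  let L : (κ ⊕ ι → ℝ) →L[ℝ] (ι → ℝ) :=
    ContinuousLinearMap.pi fun i => ContinuousLinearMap.proj (Sum.inr i)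
  change fderiv ℝ (f ∘ L) z _ = _
  rw [fderiv_comp z hf L.differentiableAt, L.fderiv]
  rfl

lemma pd_inl_comp_inr (s : κ) (f : (ι → ℝ) → ℝ) (z : κ ⊕ ι → ℝ)
    (hf : DifferentiableAt ℝ f fun i => z (Sum.inr i)) :
    pd (Sum.inl s) (fun z => f fun i => z (Sum.inr i)) z = 0 := by
  have hdir : (fun i => (Pi.single (Sum.inl s) 1 : κ ⊕ ι → ℝ) (Sum.inr i)) = 0 := by
    ext; simp
  rw [pd_comp_inr _ f z hf, hdir, map_zero]

lemma pd_inr_comp_inr (s : ι) (f : (ι → ℝ) → ℝ) (z : κ ⊕ ι → ℝ)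
    (hf : DifferentiableAt ℝ f fun i => z (Sum.inr i)) :
    pd (Sum.inr s) (fun z => f fun i => z (Sum.inr i)) z = pd s f fun i => z (Sum.inr i) := by
  have hdir : (fun i => (Pi.single (Sum.inr s) 1 : κ ⊕ ι → ℝ) (Sum.inr i)) = Pi.single s 1 := by
    ext; simp [Pi.single_apply]
  rw [pd_comp_inr _ f z hf, hdir, pd]

end PartialDerivative

namespace IsPoissonTensor

variable {ι : Type} [Fintype ι] [DecidableEq ι] {π : (ι → ℝ) → Matrix ι ι ℝ}
  {A : Matrix ι ι ℝ}

lemma differentiable_apply (hπ : IsPoissonTensor π) (i j : ι) :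
    Differentiable ℝ fun x => π x i j :=
  (hπ.1 i j).differentiable (by simp)

/-- The sum is the coordinate expression of the Schouten bracket `[π, A]`. -/
lemma schouten_const_eq_zero (hπ : IsPoissonTensor π)
    (hcomp : IsPoissonTensor fun x => π x + A) (x : ι → ℝ) (i j k : ι) :
    ∑ s, (A s k * pd s (fun y => π y i j) x + A s j * pd s (fun y => π y k i) x
      + A s i * pd s (fun y => π y j k) x) = 0 := by
  have hjac := hπ.2.2 x i j k
  have hjac_add := hcomp.2.2 x i j k
  simp only [Matrix.add_apply, pd_add_const] at hjac_add
  have hsub := congrArg₂ (· - ·) hjac_add hjac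
  simp only [← Finset.sum_sub_distrib, sub_zero] at hsub
  rw [← hsub]
  exact Finset.sum_congr rfl fun s _ => by ring

theorem fromBlocks_const (hπ : IsPoissonTensor π) (hA : ∀ i j, A j i = -A i j)
    (hcomp : IsPoissonTensor fun x => π x + A) :
    IsPoissonTensor fun z : ι ⊕ ι → ℝ => Matrix.fromBlocks (π fun i => z (Sum.inr i)) A A 0 := by
  have hinl (a b s : ι) (z : ι ⊕ ι → ℝ) :
      pd (Sum.inl s) (fun z => π (fun i => z (Sum.inr i)) a b) z = 0 :=
    pd_inl_comp_inr s _ z (hπ.differentiable_apply a b _)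
  have hinr (a b s : ι) (z : ι ⊕ ι → ℝ) :
      pd (Sum.inr s) (fun z => π (fun i => z (Sum.inr i)) a b) z
        = pd s (fun y => π y a b) fun i => z (Sum.inr i) :=
    pd_inr_comp_inr s _ z (hπ.differentiable_apply a b _)
  refine ⟨?_, ?_, ?_⟩
  · have hproj : ContDiff ℝ ∞ fun z : ι ⊕ ι → ℝ => fun i => z (Sum.inr i) :=
      contDiff_pi.2 fun i => contDiff_apply ℝ ℝ (Sum.inr i)
    rintro (a | a) (b | b)
    · exact (hπ.1 a b).comp hproj
    all_goals exact contDiff_const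
  · rintro z (a | a) (b | b)
    · exact hπ.2.1 _ a b
    · exact hA a b
    · exact hA a b
    · simp
  · rintro z (a | a) (b | b) (c | c) <;>
      simp only [Matrix.fromBlocks_apply₁₁, Matrix.fromBlocks_apply₁₂,
        Matrix.fromBlocks_apply₂₁, Matrix.fromBlocks_apply₂₂, Matrix.zero_apply,
        Fintype.sum_sum_type, hinl, hinr, pd_const, zero_mul, mul_zero, add_zero,
        zero_add, Finset.sum_const_zero]
    simpa only [mul_comm] using hπ.schouten_const_eq_zero hcomp _ a b c

end IsPoissonTensor

theorem stmt17_general {N : ℕ}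
    (A : Matrix (Fin N) (Fin N) ℝ) (hA : ∀ i j, A j i = - A i j)
    (π₂ : (Fin N → ℝ) → Matrix (Fin N) (Fin N) ℝ) (hconst : ∀ x, π₂ x = A)
    (π₁ : (Fin N → ℝ) → Matrix (Fin N) (Fin N) ℝ) (hπ₁ : IsPoissonTensor π₁)
    (hcomp : IsPoissonTensor (fun x => π₁ x + π₂ x)) :
    (∀ (x y : Fin N → ℝ) (i j k : Fin N),
      ∑ s, (π₂ x s k * pd s (fun y' => π₁ y' i j) y
        + π₂ x s j * pd s (fun y' => π₁ y' k i) y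
        + π₂ x s i * pd s (fun y' => π₁ y' j k) y) = 0) ∧
    (∀ (x y : Fin N → ℝ) (i j k : Fin N),
      ∑ s, ((∑ m, y m * pd m (fun x' => π₂ x' s k) x) * pd s (fun y' => π₁ y' i j) y
        + π₁ y s i * pd s (fun x' => π₂ x' j k) x
        + π₁ y s j * pd s (fun x' => π₂ x' k i) x) = 0) ∧
    (∀ (x y : Fin N → ℝ) (i j k : Fin N),
      ∑ s, ∑ m, y s * π₁ y m k
        * pd m (fun x' => pd s (fun x'' => π₂ x'' i j) x') x = 0) ∧
    IsPoissonTensor (fun z : (Fin N ⊕ Fin N) → ℝ =>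
      Matrix.fromBlocks (π₁ (Yc z)) A A 0) := by
  obtain rfl : π₂ = fun _ => A := funext hconst
  refine ⟨fun _ y i j k => hπ₁.schouten_const_eq_zero hcomp y i j k, ?_, ?_,
    hπ₁.fromBlocks_const hA hcomp⟩ <;>
  simp

/-- a constant Poisson tensor `π₂ = A` together with any compatible Poisson
tensor `π₁` satisfies conditions (i)–(iii), and hence
`[[π₁(y), A],[A, 0]]` is a Poisson tensor on `ℝ^{2N}`. -/
theorem stmt17 {N : ℕ} (hN : 1 ≤ N)
    (A : Matrix (Fin N) (Fin N) ℝ) (hA : ∀ i j, A j i = - A i j)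
    (π₂ : (Fin N → ℝ) → Matrix (Fin N) (Fin N) ℝ) (hconst : ∀ x, π₂ x = A)
    (π₁ : (Fin N → ℝ) → Matrix (Fin N) (Fin N) ℝ) (hπ₁ : IsPoissonTensor π₁)
    (hcomp : IsPoissonTensor (fun x => π₁ x + π₂ x)) :
    (∀ (x y : Fin N → ℝ) (i j k : Fin N),
      ∑ s, (π₂ x s k * pd s (fun y' => π₁ y' i j) y
        + π₂ x s j * pd s (fun y' => π₁ y' k i) y
        + π₂ x s i * pd s (fun y' => π₁ y' j k) y) = 0) ∧
    (∀ (x y : Fin N → ℝ) (i j k : Fin N),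
      ∑ s, ((∑ m, y m * pd m (fun x' => π₂ x' s k) x) * pd s (fun y' => π₁ y' i j) y
        + π₁ y s i * pd s (fun x' => π₂ x' j k) x
        + π₁ y s j * pd s (fun x' => π₂ x' k i) x) = 0) ∧
    (∀ (x y : Fin N → ℝ) (i j k : Fin N),
      ∑ s, ∑ m, y s * π₁ y m k
        * pd m (fun x' => pd s (fun x'' => π₂ x'' i j) x') x = 0) ∧
    IsPoissonTensor (fun z : (Fin N ⊕ Fin N) → ℝ =>
      Matrix.fromBlocks (π₁ (Yc z)) A A 0) :=
  stmt17_general A hA π₂ hconst π₁ hπ₁ hcomp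
end

section
/- Let π₂ be a constant Poisson tensor on ℝ^N (π₂(x) = A for all x, A a constant antisymmetric N×N real matrix) and let π₁ be a Poisson tensor on ℝ^N compatible with π₂. Let H, K : ℝ^N → ℝ be smooth functions in involution with respect to both structures: ∑_{s,m} π_{1,sm}(x) (∂H/∂x_s)(∂K/∂x_m) = 0 and ∑_{s,m} A_{sm} (∂H/∂x_s)(∂K/∂x_m) = 0 on ℝ^N. Define on ℝ^{2N} the functions H̄(x,y) = H(y), K̄(x,y) = K(y), H̃(x,y) = ∑_{s=1}^N (∂H/∂x_s)(y)·x_s, K̃(x,y) = ∑_{s=1}^N (∂K/∂x_s)(y)·x_s. Then all pairwise Poisson brackets with respect to the Poisson tensor π₁ ⋉₁ π₂ on ℝ^{2N} (blocks Π^{xx}(x,y)=π₁(y), Π^{xy}=Π^{yx}=A, Π^{yy}=0) vanish: {H̄,K̄} = {H̄,K̃} = {H̃,K̄} = {H̃,K̃} = 0. -/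
open scoped ContDiff

/-- Poisson bracket of functions with respect to a matrix field `Π`:
`{F,G} = ∑_{i,j} Π_{ij} ∂F/∂z_i ∂G/∂z_j`. -/
noncomputable def pBr {ι : Type} [Fintype ι] [DecidableEq ι]
    (P : (ι → ℝ) → Matrix ι ι ℝ) (F G : (ι → ℝ) → ℝ) (z : ι → ℝ) : ℝ :=
  ∑ i, ∑ j, P z i j * pd i F z * pd j G z

/-!
The lifts `H̄ = H ∘ y` do not depend on `x`, and the `yy`-block of the tensor vanishes, so
`{H̄, K̄} = 0` and the mixed brackets reduce to the `A`-bracket `{H, K}_A (y) = 0`. The complete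
lifts are `H̃ (x, y) = dH(y) x`; in `{H̃, K̃}` the `xx`-block contributes `{H, K}_{π₁} (y) = 0`,
while, by the symmetry of second derivatives, the two off-diagonal blocks add up to the derivative
of `{H, K}_A` at `y` in the direction `x`, which vanishes since `{H, K}_A` is identically zero.
-/

section PartialDerivatives

variable {ι : Type} [Fintype ι] [DecidableEq ι]

lemma contDiff_pd {n : WithTop ℕ∞} (s : ι) {f : (ι → ℝ) → ℝ} (hf : ContDiff ℝ (n + 1) f) :
    ContDiff ℝ n (pd s f) :=
  (hf.fderiv_right le_rfl).clm_apply contDiff_const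

lemma pd_pd_comm {f : (ι → ℝ) → ℝ} (hf : ContDiff ℝ 2 f) (s j : ι) (x : ι → ℝ) :
    pd j (pd s f) x = pd s (pd j f) x := by
  have hdf : DifferentiableAt ℝ (fderiv ℝ f) x :=
    (hf.fderiv_right (m := 1) (by norm_num)).differentiable one_ne_zero x
  have hsymm : IsSymmSndFDerivAt ℝ f x := hf.contDiffAt.isSymmSndFDerivAt (by simp)
  unfold pd
  rw [fderiv_clm_apply hdf (differentiableAt_const _),
    fderiv_clm_apply hdf (differentiableAt_const _)]
  simpa using hsymm (Pi.single j 1) (Pi.single s 1)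

lemma sum_pd_mul_eq_fderiv (f : (ι → ℝ) → ℝ) (x v : ι → ℝ) :
    ∑ s, pd s f x * v s = fderiv ℝ f x v := by
  conv_rhs => rw [pi_eq_sum_univ' v]
  simp [pd, mul_comm]

end PartialDerivatives

lemma fderiv_sum_sum_mul_mul {E ι κ : Type*} [NormedAddCommGroup E] [NormedSpace ℝ E]
    [Fintype ι] [Fintype κ] (A : Matrix ι κ ℝ) {u : ι → E → ℝ} {w : κ → E → ℝ} {y : E}
    (hu : ∀ i, DifferentiableAt ℝ (u i) y) (hw : ∀ j, DifferentiableAt ℝ (w j) y) (v : E) :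
    fderiv ℝ (fun x => ∑ i, ∑ j, A i j * u i x * w j x) y v =
      ∑ i, ∑ j, A i j * u i y * fderiv ℝ (w j) y v
        + ∑ i, ∑ j, A i j * fderiv ℝ (u i) y v * w j y := by
  have hsum := HasFDerivAt.fun_sum (u := Finset.univ) fun i _ =>
    HasFDerivAt.fun_sum (u := Finset.univ) fun j _ =>
      (((hu i).hasFDerivAt.const_mul (A i j)).fun_mul (hw j).hasFDerivAt)
  rw [hsum.fderiv]
  simp only [sum_apply, add_apply, smul_apply, smul_eq_mul, ← Finset.sum_add_distrib]
  refine Finset.sum_congr rfl fun i _ => Finset.sum_congr rfl fun j _ => ?_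
  ring

lemma pBr_fromBlocks {ι κ : Type} [Fintype ι] [DecidableEq ι] [Fintype κ] [DecidableEq κ]
    (P : ((ι ⊕ κ) → ℝ) → Matrix ι ι ℝ) (B : ((ι ⊕ κ) → ℝ) → Matrix ι κ ℝ)
    (C : ((ι ⊕ κ) → ℝ) → Matrix κ ι ℝ) (D : ((ι ⊕ κ) → ℝ) → Matrix κ κ ℝ)
    (F G : ((ι ⊕ κ) → ℝ) → ℝ) (z : (ι ⊕ κ) → ℝ) :
    pBr (fun z => Matrix.fromBlocks (P z) (B z) (C z) (D z)) F G z =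
      ∑ i, ∑ j, P z i j * pd (.inl i) F z * pd (.inl j) G z
        + ∑ i, ∑ j, B z i j * pd (.inl i) F z * pd (.inr j) G z
        + ∑ i, ∑ j, C z i j * pd (.inr i) F z * pd (.inl j) G z
        + ∑ i, ∑ j, D z i j * pd (.inr i) F z * pd (.inr j) G z := by
  simp only [pBr, Fintype.sum_sum_type, Matrix.fromBlocks_apply₁₁, Matrix.fromBlocks_apply₁₂,
    Matrix.fromBlocks_apply₂₁, Matrix.fromBlocks_apply₂₂, Finset.sum_add_distrib]
  ring

section Lifts

variable {N : ℕ}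

noncomputable def YcL (N : ℕ) : ((Fin N ⊕ Fin N) → ℝ) →L[ℝ] (Fin N → ℝ) :=
  ContinuousLinearMap.pi fun i => ContinuousLinearMap.proj (Sum.inr i)

@[simp] lemma YcL_apply (z : (Fin N ⊕ Fin N) → ℝ) : YcL N z = Yc z := rfl

@[simp] lemma Yc_single_inl (i : Fin N) : Yc (Pi.single (Sum.inl i) (1 : ℝ)) = 0 := by
  ext j; simp [Yc]

@[simp] lemma Yc_single_inr (i : Fin N) :
    Yc (Pi.single (Sum.inr i) (1 : ℝ)) = Pi.single i 1 := by
  ext j; simp [Yc, Pi.single_apply]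

lemma hasFDerivAt_comp_Yc {f : (Fin N → ℝ) → ℝ} {z : (Fin N ⊕ Fin N) → ℝ}
    (hf : DifferentiableAt ℝ f (Yc z)) :
    HasFDerivAt (fun z => f (Yc z)) ((fderiv ℝ f (Yc z)).comp (YcL N)) z :=
  hf.hasFDerivAt.comp z (YcL N).hasFDerivAt

variable {f : (Fin N → ℝ) → ℝ} {z : (Fin N ⊕ Fin N) → ℝ}

lemma pd_inl_comp_Yc (hf : DifferentiableAt ℝ f (Yc z)) (i : Fin N) :
    pd (.inl i) (fun z => f (Yc z)) z = 0 := by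
  simp [pd, (hasFDerivAt_comp_Yc hf).fderiv]

lemma pd_inr_comp_Yc (hf : DifferentiableAt ℝ f (Yc z)) (i : Fin N) :
    pd (.inr i) (fun z => f (Yc z)) z = pd i f (Yc z) := by
  simp [pd, (hasFDerivAt_comp_Yc hf).fderiv]

lemma pd_completeLift (hf : ContDiff ℝ 2 f) (e : Fin N ⊕ Fin N) :
    pd e (fun z => ∑ s, pd s f (Yc z) * z (.inl s)) z =
      ∑ s, (fderiv ℝ (pd s f) (Yc z) (Yc (Pi.single e 1)) * z (.inl s)
        + pd s f (Yc z) * (Pi.single e 1 : (Fin N ⊕ Fin N) → ℝ) (.inl s)) := by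
  have hpd : ∀ s, DifferentiableAt ℝ (pd s f) (Yc z) := fun s =>
    (contDiff_pd (n := 1) s hf).differentiable one_ne_zero _
  have hsum := HasFDerivAt.fun_sum (u := Finset.univ) fun s _ =>
    (hasFDerivAt_comp_Yc (hpd s)).fun_mul (hasFDerivAt_apply (Sum.inl s) z)
  rw [pd, hsum.fderiv]
  simp [add_comm, mul_comm]

lemma pd_inl_completeLift (hf : ContDiff ℝ 2 f) (i : Fin N) :
    pd (.inl i) (fun z => ∑ s, pd s f (Yc z) * z (.inl s)) z = pd i f (Yc z) := by
  simp [pd_completeLift hf, Pi.single_apply]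

lemma pd_inr_completeLift (hf : ContDiff ℝ 2 f) (j : Fin N) :
    pd (.inr j) (fun z => ∑ s, pd s f (Yc z) * z (.inl s)) z =
      fderiv ℝ (pd j f) (Yc z) (Xc z) := by
  simp only [pd_completeLift hf, Yc_single_inr, Pi.single_apply, reduceCtorEq, if_false,
    mul_zero, add_zero]
  rw [← sum_pd_mul_eq_fderiv]
  exact Finset.sum_congr rfl fun s _ => congrArg (· * _) (pd_pd_comm hf s j _)

end Lifts

theorem stmt19_general {N : ℕ}
    (A : Matrix (Fin N) (Fin N) ℝ)
    (π₁ : (Fin N → ℝ) → Matrix (Fin N) (Fin N) ℝ)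
    (H K : (Fin N → ℝ) → ℝ) (hH : ContDiff ℝ ∞ H) (hK : ContDiff ℝ ∞ K)
    (hinv₁ : ∀ x, ∑ s, ∑ m, π₁ x s m * pd s H x * pd m K x = 0)
    (hinv₂ : ∀ x, ∑ s, ∑ m, A s m * pd s H x * pd m K x = 0) :
    (∀ z : (Fin N ⊕ Fin N) → ℝ,
      pBr (fun z => Matrix.fromBlocks (π₁ (Yc z)) A A 0)
        (fun z => H (Yc z)) (fun z => K (Yc z)) z = 0) ∧
    (∀ z : (Fin N ⊕ Fin N) → ℝ,
      pBr (fun z => Matrix.fromBlocks (π₁ (Yc z)) A A 0)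
        (fun z => H (Yc z)) (fun z => ∑ s, pd s K (Yc z) * z (Sum.inl s)) z = 0) ∧
    (∀ z : (Fin N ⊕ Fin N) → ℝ,
      pBr (fun z => Matrix.fromBlocks (π₁ (Yc z)) A A 0)
        (fun z => ∑ s, pd s H (Yc z) * z (Sum.inl s)) (fun z => K (Yc z)) z = 0) ∧
    (∀ z : (Fin N ⊕ Fin N) → ℝ,
      pBr (fun z => Matrix.fromBlocks (π₁ (Yc z)) A A 0)
        (fun z => ∑ s, pd s H (Yc z) * z (Sum.inl s))
        (fun z => ∑ s, pd s K (Yc z) * z (Sum.inl s)) z = 0) := by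
  have hH2 : ContDiff ℝ 2 H := hH.of_le (by norm_cast)
  have hK2 : ContDiff ℝ 2 K := hK.of_le (by norm_cast)
  have hdH : ∀ s, Differentiable ℝ (pd s H) := fun s =>
    (contDiff_pd (n := 1) s hH2).differentiable one_ne_zero
  have hdK : ∀ s, Differentiable ℝ (pd s K) := fun s =>
    (contDiff_pd (n := 1) s hK2).differentiable one_ne_zero
  have hcross : ∀ y v, ∑ i, ∑ j, A i j * pd i H y * fderiv ℝ (pd j K) y v
      + ∑ i, ∑ j, A i j * fderiv ℝ (pd i H) y v * pd j K y = 0 := fun y v => by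
    rw [← fderiv_sum_sum_mul_mul A (fun i => hdH i y) (fun j => hdK j y), funext hinv₂]
    simp
  have hH1 : Differentiable ℝ H := hH2.differentiable two_ne_zero
  have hK1 : Differentiable ℝ K := hK2.differentiable two_ne_zero
  refine ⟨fun z => ?_, fun z => ?_, fun z => ?_, fun z => ?_⟩ <;>
    simp only [pBr_fromBlocks (fun z => π₁ (Yc z)) (fun _ => A) (fun _ => A) (fun _ => 0),
      pd_inl_comp_Yc (hH1 _), pd_inl_comp_Yc (hK1 _), pd_inr_comp_Yc (hH1 _),
      pd_inr_comp_Yc (hK1 _), pd_inl_completeLift hH2, pd_inl_completeLift hK2,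
      pd_inr_completeLift hH2, pd_inr_completeLift hK2,
      Matrix.zero_apply, zero_mul, mul_zero, Finset.sum_const_zero, add_zero, zero_add]
  · exact hinv₂ (Yc z)
  · exact hinv₂ (Yc z)
  · rw [hinv₁, zero_add, hcross]

/-- for `H, K` in involution w.r.t. both `π₁` and the constant tensor
`π₂ = A`, the lifts `H̄(x,y) = H(y)`, `H̃(x,y) = ∑_s (∂H/∂x_s)(y) x_s` (and likewise for
`K`) pairwise Poisson-commute w.r.t. `π₁ ⋉₁ π₂ = [[π₁(y), A],[A, 0]]`. -/
theorem stmt19 {N : ℕ} (hN : 1 ≤ N)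
    (A : Matrix (Fin N) (Fin N) ℝ) (hA : ∀ i j, A j i = - A i j)
    (π₁ : (Fin N → ℝ) → Matrix (Fin N) (Fin N) ℝ) (hπ₁ : IsPoissonTensor π₁)
    (hcomp : IsPoissonTensor (fun x => π₁ x + A))
    (H K : (Fin N → ℝ) → ℝ) (hH : ContDiff ℝ ∞ H) (hK : ContDiff ℝ ∞ K)
    (hinv₁ : ∀ x, ∑ s, ∑ m, π₁ x s m * pd s H x * pd m K x = 0)
    (hinv₂ : ∀ x, ∑ s, ∑ m, A s m * pd s H x * pd m K x = 0) :
    (∀ z : (Fin N ⊕ Fin N) → ℝ,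
      pBr (fun z => Matrix.fromBlocks (π₁ (Yc z)) A A 0)
        (fun z => H (Yc z)) (fun z => K (Yc z)) z = 0) ∧
    (∀ z : (Fin N ⊕ Fin N) → ℝ,
      pBr (fun z => Matrix.fromBlocks (π₁ (Yc z)) A A 0)
        (fun z => H (Yc z)) (fun z => ∑ s, pd s K (Yc z) * z (Sum.inl s)) z = 0) ∧
    (∀ z : (Fin N ⊕ Fin N) → ℝ,
      pBr (fun z => Matrix.fromBlocks (π₁ (Yc z)) A A 0)
        (fun z => ∑ s, pd s H (Yc z) * z (Sum.inl s)) (fun z => K (Yc z)) z = 0) ∧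
    (∀ z : (Fin N ⊕ Fin N) → ℝ,
      pBr (fun z => Matrix.fromBlocks (π₁ (Yc z)) A A 0)
        (fun z => ∑ s, pd s H (Yc z) * z (Sum.inl s))
        (fun z => ∑ s, pd s K (Yc z) * z (Sum.inl s)) z = 0) :=
  stmt19_general A π₁ H K hH hK hinv₁ hinv₂
end
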